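/- Let E1 > 0, E0 > 0, δ ∈ (0,1), π ∈ (0,1), q ∈ (0,1), and let n ≥ 1 be a natural number. Define τ^a = min{t ∈ ℕ : p(t,q) ≤ p^a} and τ^e = min{t ∈ ℕ : p(n·t, q) ≤ p^e(n)} (the agent with n arms takes n draws per period). Then n·τ^e ≥ τ^a: the total number of draws taken before stopping in the n-arm problem is at least the number taken in the one-arm problem. -/
import Mathlib


/-- With `τ^a = min{t : p(t,q) ≤ p^a}` and `τ^e = min{t : p(n·t,q) ≤ p^e(n)}`
(the agent with `n` arms takes `n` draws per period), the total number of draws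
satisfies `n·τ^e ≥ τ^a`. -/
theorem total_draws_more_with_n_arms
    (E1 E0 δ π q : ℝ) (hE1 : 0 < E1) (hE0 : 0 < E0)
    (hδ : δ ∈ Set.Ioo (0 : ℝ) 1) (hπ : π ∈ Set.Ioo (0 : ℝ) 1)
    (hq : q ∈ Set.Ioo (0 : ℝ) 1) (n : ℕ) (hn : 1 ≤ n) :
    let pp : ℕ → ℝ := fun t => q * (1 - π) ^ t / (q * (1 - π) ^ t + (1 - q))
    let pa := (1 - δ) * E0 / ((1 - δ) * (E1 + E0) + δ * π * E1)
    let pe := (1 - δ) * E0 / ((1 - δ) * (E1 + E0) + δ * (n : ℝ) * π * E1)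
    let τa := sInf {t : ℕ | pp t ≤ pa}
    let τe := sInf {t : ℕ | pp (n * t) ≤ pe}
    τa ≤ n * τe := by
  intro pp pa pe τa τe
  obtain ⟨hδ0, hδ1⟩ := hδ
  obtain ⟨hπ0, hπ1⟩ := hπ
  obtain ⟨hq0, hq1⟩ := hq
  have hr0 : (0:ℝ) ≤ 1 - π := by linarith
  have hr1 : 1 - π < 1 := by linarith
  have hq1' : (0:ℝ) < 1 - q := by linarith
  have hn' : (1:ℝ) ≤ (n:ℝ) := by exact_mod_cast hn
  have h1δ : (0:ℝ) < 1 - δ := by linarith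
  have hdena : 0 < (1 - δ) * (E1 + E0) + δ * π * E1 := by positivity
  have hkey : (0:ℝ) ≤ ((n:ℝ) - 1) * (δ * π * E1) :=
    mul_nonneg (by linarith) (by positivity)
  have hdene : 0 < (1 - δ) * (E1 + E0) + δ * (n:ℝ) * π * E1 := by nlinarith
  have hnum : 0 < (1 - δ) * E0 := by positivity
  have hpe0 : 0 < pe := div_pos hnum hdene
  have hpepa : pe ≤ pa := by
    apply div_le_div_of_nonneg_left hnum.le hdena
    nlinarith
  -- pp t ≤ q * (1-π)^t / (1-q)
  have hppb : ∀ t : ℕ, pp t ≤ q * (1 - π) ^ t / (1 - q) := by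
    intro t
    have h1 : (0:ℝ) ≤ q * (1 - π) ^ t := by positivity
    apply div_le_div_of_nonneg_left h1 hq1'
    linarith
  -- the τe set is nonempty
  have hne : {t : ℕ | pp (n * t) ≤ pe}.Nonempty := by
    obtain ⟨t0, ht0⟩ := exists_pow_lt_of_lt_one (mul_pos hpe0 (mul_pos hq1' (by positivity : (0:ℝ) < 1/q))) hr1
    refine ⟨t0, ?_⟩
    have hpow : (1 - π) ^ (n * t0) ≤ (1 - π) ^ t0 :=
      pow_le_pow_of_le_one hr0 (by linarith) (Nat.le_mul_of_pos_left t0 (by omega))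
    have h2 : pp (n * t0) ≤ q * (1 - π) ^ (n * t0) / (1 - q) := hppb _
    have h3 : q * (1 - π) ^ (n * t0) / (1 - q) ≤ q * (1 - π) ^ t0 / (1 - q) := by
      gcongr
    have h4 : q * (1 - π) ^ t0 / (1 - q) ≤ pe := by
      rw [div_le_iff₀ hq1']
      have := ht0.le
      calc q * (1 - π) ^ t0 ≤ q * (pe * ((1 - q) * (1/q))) := by
            exact mul_le_mul_of_nonneg_left this (le_of_lt hq0)
        _ = pe * (1 - q) := by field_simp
    simpa [Set.mem_setOf_eq] using h2.trans (h3.trans h4)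
  have hmem : pp (n * τe) ≤ pe := Nat.sInf_mem hne
  have : pp (n * τe) ≤ pa := hmem.trans hpepa
  exact Nat.sInf_le this
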